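/- Exact case (McLennan's theorem as the ε = 0 instance): suppose there are at least three candidates. If an anonymous randomized voting rule v is pairwise responsive, pairwise isolated, and satisfies 0-super-weak unanimity (for every candidate x there is a profile with x on top of every ordering on which x is selected with probability 1), then v equals the random dictatorship rule: v(x, P⃗) = |{i : top(P_i)=x}|/n for every profile P⃗ and candidate x. -/

import Mathlib

open Finset

variable {C : Type*}

/-- A preference ordering on `C`: a ranking of the candidates, where a higher
rank means more preferred. -/
abbrev Pref (C : Type*) [Fintype C] := C ≃ Fin (Fintype.card C)

/-- `x` is strictly preferred to `y` in `P`. -/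
def PrefOver [Fintype C] (P : Pref C) (x y : C) : Prop := P y < P x

/-- The top (most preferred) candidate of `P`. -/
def topC [Fintype C] [Nonempty C] (P : Pref C) : C :=
  P.symm ⟨Fintype.card C - 1, Nat.sub_lt Fintype.card_pos Nat.one_pos⟩

/-- `x` is directly above `y` in `P`. -/
def DirAbove [Fintype C] (P : Pref C) (x y : C) : Prop := (P x : ℕ) = (P y : ℕ) + 1

/-- The ordering `P` with candidates `x` and `y` swapped. -/
def swapIn [Fintype C] [DecidableEq C] (P : Pref C) (x y : C) : Pref C :=
  (Equiv.swap x y).trans P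

/-- A (randomized) voting rule: nonnegative selection probabilities summing to 1. -/
def IsVotingRule [Fintype C] {n : ℕ} (v : (Fin n → Pref C) → C → ℝ) : Prop :=
  (∀ Pvec x, 0 ≤ v Pvec x) ∧ (∀ Pvec, ∑ x, v Pvec x = 1)

def Anonymous [Fintype C] {n : ℕ} (v : (Fin n → Pref C) → C → ℝ) : Prop :=
  ∀ (σ : Equiv.Perm (Fin n)) (Pvec : Fin n → Pref C) (x : C), v (Pvec ∘ σ) x = v Pvec x

/-- Expected utility of a distribution `d` over candidates under utility `u`. -/
def EU [Fintype C] (u : C → ℝ) (d : C → ℝ) : ℝ := ∑ x, u x * d x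

/-- A `[0,1]`-valued utility function consistent with the ordering `P`. -/
def Consistent [Fintype C] (u : C → ℝ) (P : Pref C) : Prop :=
  (∀ x, u x ∈ Set.Icc (0 : ℝ) 1) ∧ ∀ x y, u x > u y ↔ PrefOver P x y

/-- The random dictatorship voting rule. -/
noncomputable def vdict [Fintype C] [Nonempty C] [DecidableEq C] {n : ℕ}
    (Pvec : Fin n → Pref C) (x : C) : ℝ :=
  ((Finset.univ.filter (fun i => topC (Pvec i) = x)).card : ℝ) / n

def StrategyProofRule [Fintype C] {n : ℕ} (v : (Fin n → Pref C) → C → ℝ) : Prop :=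
  ∀ (i : Fin n) (Pvec : Fin n → Pref C) (P' : Pref C) (u : C → ℝ),
    Consistent u (Pvec i) → EU u (v (Function.update Pvec i P')) ≤ EU u (v Pvec)

def IsBelief [Fintype C] [DecidableEq C] (φ : Pref C → ℝ) : Prop :=
  (∀ P, 0 ≤ φ P) ∧ ∑ P, φ P = 1

/-- The profile where voter `i` submits `Pi` and the other voters submit `Q`. -/
def profileWith [Fintype C] {n : ℕ} (i : Fin n) (Q : {j : Fin n // j ≠ i} → Pref C)
    (Pi : Pref C) : Fin n → Pref C :=
  fun j => if h : j = i then Pi else Q ⟨j, h⟩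

/-- Expected utility for voter `i` reporting `Pi` when the others' orderings are
i.i.d. with distribution `φ`. -/
noncomputable def beliefEU [Fintype C] [DecidableEq C] {n : ℕ}
    (v : (Fin n → Pref C) → C → ℝ) (i : Fin n) (φ : Pref C → ℝ) (u : C → ℝ)
    (Pi : Pref C) : ℝ :=
  ∑ Q : {j : Fin n // j ≠ i} → Pref C, (∏ j, φ (Q j)) * EU u (v (profileWith i Q Pi))

/-- Strategy-proofness with respect to a single i.i.d. belief `φ`. -/
def SPwrtBelief [Fintype C] [DecidableEq C] {n : ℕ}
    (v : (Fin n → Pref C) → C → ℝ) (φ : Pref C → ℝ) : Prop :=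
  ∀ (i : Fin n) (Pi Pi' : Pref C) (u : C → ℝ),
    Consistent u Pi → beliefEU v i φ u Pi' ≤ beliefEU v i φ u Pi

/-- Weak strategy-proofness: strategy-proofness w.r.t. all i.i.d. beliefs. -/
def WeaklySP [Fintype C] [DecidableEq C] {n : ℕ}
    (v : (Fin n → Pref C) → C → ℝ) : Prop :=
  ∀ φ : Pref C → ℝ, IsBelief φ → SPwrtBelief v φ

def ParetoEff [Fintype C] {n : ℕ} (ε : ℝ) (v : (Fin n → Pref C) → C → ℝ) : Prop :=
  ∀ (x y : C) (Pvec : Fin n → Pref C), (∀ i, PrefOver (Pvec i) x y) → v Pvec y ≤ ε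

def StrongUnanimity [Fintype C] [Nonempty C] {n : ℕ} (ε : ℝ)
    (v : (Fin n → Pref C) → C → ℝ) : Prop :=
  ∀ (x : C) (Pvec : Fin n → Pref C), (∀ i, topC (Pvec i) = x) → 1 - ε ≤ v Pvec x

def WeakUnanimity [Fintype C] [Nonempty C] {n : ℕ} (ε : ℝ)
    (v : (Fin n → Pref C) → C → ℝ) : Prop :=
  ∀ P : Pref C, 1 - ε ≤ v (fun _ => P) (topC P)

def SuperWeakUnanimity [Fintype C] [Nonempty C] {n : ℕ} (ε : ℝ)
    (v : (Fin n → Pref C) → C → ℝ) : Prop :=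
  ∀ x : C, ∃ Pvec : Fin n → Pref C, (∀ i, topC (Pvec i) = x) ∧ 1 - ε ≤ v Pvec x

def PairwiseResponsive [Fintype C] [DecidableEq C] {n : ℕ}
    (v : (Fin n → Pref C) → C → ℝ) : Prop :=
  ∀ (Pvec : Fin n → Pref C) (i : Fin n) (x y z : C),
    DirAbove (Pvec i) x y → z ≠ x → z ≠ y →
      v (Function.update Pvec i (swapIn (Pvec i) x y)) z = v Pvec z

def PairwiseIsolated [Fintype C] [DecidableEq C] {n : ℕ}
    (v : (Fin n → Pref C) → C → ℝ) : Prop :=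
  ∀ (i : Fin n) (Pvec Pvec' : Fin n → Pref C) (x y : C),
    DirAbove (Pvec i) x y → Pvec' i = Pvec i →
    (∀ j, j ≠ i → (PrefOver (Pvec j) x y ↔ PrefOver (Pvec' j) x y)) →
    v (Function.update Pvec' i (swapIn (Pvec' i) x y)) y - v Pvec' y =
      v (Function.update Pvec i (swapIn (Pvec i) x y)) y - v Pvec y

/-- The ordering `e` with candidate `x` moved to the top (relative order of the
other candidates preserved). -/
def moveToTop [Fintype C] [DecidableEq C] (e : Pref C) (x : C) : Pref C :=
  e.trans ((Fin.revPerm.trans (Fin.cycleRange (e x).rev)).trans Fin.revPerm)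

/-- The ordering `e` with candidate `x` moved to the bottom (relative order of
the other candidates preserved). -/
def moveToBot [Fintype C] [DecidableEq C] (e : Pref C) (x : C) : Pref C :=
  e.trans (Fin.cycleRange (e x))

/-- The canonical profile `P⃗^{x,j}`: the first `j` voters rank `x` on top and
the remaining voters rank `x` on the bottom, with the other candidates ordered
according to the fixed ordering `e`. -/
def canonProfile [Fintype C] [DecidableEq C] {n : ℕ} (e : Pref C) (x : C) (j : ℕ) :
    Fin n → Pref C :=
  fun i => if (i : ℕ) < j then moveToTop e x else moveToBot e x

/-- `v'(x,j)`: the selection probability of `x` on the canonical profile with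
exactly `j` voters ranking `x` first. -/
def vTopCount [Fintype C] [DecidableEq C] {n : ℕ} (v : (Fin n → Pref C) → C → ℝ)
    (e : Pref C) (x : C) (j : ℕ) : ℝ :=
  v (canonProfile e x j) x

/-!
Pairwise responsiveness makes the probability of `y` depend only on the sets of candidates the
voters rank above `y`: any two such orderings are connected by adjacent swaps not involving `y`.
With unanimity this gives Pareto efficiency, and with isolation it follows that `y` may pass an
adjacent candidate at no cost as long as a third candidate stays above it. Hence moving `x` to the
bottom of a voter who does not rank it first leaves its probability unchanged, and, by isolation
and anonymity, moving `x` from the bottom to the top of one voter's ordering raises it by a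
constant `d`. The unanimous profiles give `x` probability `0` and `1`, so `n * d = 1` and `x` has
probability `|{i | top(P i) = x}| / n`.
-/

open Function

theorem apply_eq_of_forall_update_eq {ι α β : Type*} [Fintype ι] [DecidableEq ι]
    {F : (ι → α) → β} {P Q : ι → α} (h : ∀ R i, R i = P i → F (update R i (Q i)) = F R) :
    F Q = F P := by
  suffices ∀ s : Finset ι, F (s.piecewise Q P) = F P by simpa using this Finset.univ
  intro s
  induction s using Finset.induction_on with
  | empty => simp
  | insert i s hi ih => rw [Finset.piecewise_insert, h _ _ (s.piecewise_eq_of_notMem _ _ hi), ih]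

theorem Finset.eq_add_card_mul_of_insert {α : Type*} [DecidableEq α] {f : Finset α → ℝ} {d : ℝ}
    (h : ∀ s i, i ∉ s → f (insert i s) = f s + d) (s : Finset α) :
    f s = f ∅ + s.card * d := by
  induction s using Finset.induction_on with
  | empty => simp
  | insert i s hi ih => rw [h s i hi, ih, Finset.card_insert_of_notMem hi]; push_cast; ring

section Orderings

variable [Fintype C]

instance (P : Pref C) (a b : C) : Decidable (PrefOver P a b) :=
  inferInstanceAs (Decidable (P b < P a))

theorem prefOver_iff {P : Pref C} {a b : C} : PrefOver P a b ↔ (P b : ℕ) < P a := Fin.lt_def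

theorem PrefOver.ne {P : Pref C} {a b : C} (h : PrefOver P a b) : a ≠ b := by
  rintro rfl; exact lt_irrefl _ h

theorem PrefOver.not_prefOver {P : Pref C} {a b : C} (h : PrefOver P a b) : ¬PrefOver P b a :=
  lt_asymm h

theorem val_apply_ne (P : Pref C) {a b : C} (h : a ≠ b) : (P a : ℕ) ≠ P b :=
  fun hab => h (P.injective (Fin.ext hab))

theorem DirAbove.prefOver {P : Pref C} {a b : C} (h : DirAbove P a b) : PrefOver P a b := by
  rw [prefOver_iff, h]; omega

theorem prefOver_iff_ne_of_val_eq_zero {P : Pref C} {x : C} (hx : (P x : ℕ) = 0) (z : C) :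
    PrefOver P z x ↔ z ≠ x := by
  rw [prefOver_iff, hx]
  exact ⟨fun h hz => by simp [hz, hx] at h, fun h => Nat.pos_of_ne_zero (hx ▸ val_apply_ne P h)⟩

theorem Pref.eq_of_forall_dirAbove {P Q : Pref C} (h : ∀ a b, DirAbove P a b → PrefOver Q a b) :
    P = Q := by
  have hmono : StrictMono (Q ∘ P.symm) := strictMono_of_lt_succ fun k hk => by
    have hcov := Nat.covBy_iff_add_one_eq.1 (Fin.covBy_iff.1 (Order.covBy_succ_of_not_isMax hk))
    exact h _ _ (by simp [DirAbove, hcov])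
  ext z
  simpa using congrArg Fin.val (congrFun hmono.eq_id (P z)).symm

theorem exists_dirAbove_prefOver_of_ne {P Q : Pref C} (h : P ≠ Q) :
    ∃ a b, DirAbove P a b ∧ PrefOver Q b a := by
  by_contra! hPQ
  refine h (Pref.eq_of_forall_dirAbove fun a b hab => ?_)
  exact lt_of_le_of_ne (not_lt.1 (hPQ a b hab)) fun he => hab.prefOver.ne (Q.injective he.symm)

theorem topC_eq_iff [Nonempty C] {P : Pref C} {c : C} :
    topC P = c ↔ (P c : ℕ) = Fintype.card C - 1 := by
  rw [topC, Equiv.symm_apply_eq, Fin.ext_iff, eq_comm]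

theorem not_prefOver_of_topC_eq [Nonempty C] {P : Pref C} {c : C} (h : topC P = c) (z : C) :
    ¬PrefOver P z c := by
  rw [topC_eq_iff] at h
  rw [prefOver_iff, h]
  have := (P z).isLt
  omega

theorem prefOver_of_topC_eq [Nonempty C] {P : Pref C} {c z : C} (h : topC P = c) (hz : z ≠ c) :
    PrefOver P c z := by
  rw [topC_eq_iff] at h
  rw [prefOver_iff, h]
  have := (P z).isLt
  have := val_apply_ne P hz
  omega

theorem exists_dirAbove_of_topC_eq [Nonempty C] (hC : 2 ≤ Fintype.card C) {P : Pref C} {c : C}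
    (h : topC P = c) : ∃ y, DirAbove P c y :=
  ⟨P.symm ⟨Fintype.card C - 2, by omega⟩, by
    have := topC_eq_iff.1 h
    simp only [DirAbove, Equiv.apply_symm_apply]
    omega⟩

/-- The termination measure for bubble-sorting `P` into `Q`: by the rearrangement inequality it
drops under every adjacent swap in `P` of a pair that `Q` orders the other way. -/
def discordance (P Q : Pref C) : ℕ := ∑ z, (P z : ℕ) * (Q z).rev

variable [DecidableEq C]

@[simp]
theorem swapIn_apply_left (P : Pref C) (a b : C) : swapIn P a b a = P b := by
  simp [swapIn]

@[simp]
theorem swapIn_apply_right (P : Pref C) (a b : C) : swapIn P a b b = P a := by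
  simp [swapIn]

theorem swapIn_apply_of_ne_of_ne (P : Pref C) {a b z : C} (ha : z ≠ a) (hb : z ≠ b) :
    swapIn P a b z = P z := by
  simp [swapIn, Equiv.swap_apply_of_ne_of_ne ha hb]

theorem swapIn_swapIn (P : Pref C) (a b : C) : swapIn (swapIn P a b) b a = P := by
  ext z
  simp [swapIn, Equiv.swap_comm a b]

theorem DirAbove.dirAbove_swapIn {P : Pref C} {a b : C} (h : DirAbove P a b) :
    DirAbove (swapIn P a b) b a := by
  simp only [DirAbove, swapIn_apply_left, swapIn_apply_right] at h ⊢
  omega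

theorem DirAbove.prefOver_swapIn_iff {P : Pref C} {a b y : C} (h : DirAbove P a b)
    (hya : y ≠ a) (hyb : y ≠ b) (z : C) : PrefOver (swapIn P a b) z y ↔ PrefOver P z y := by
  have := val_apply_ne P hya
  have := val_apply_ne P hyb
  simp only [prefOver_iff, DirAbove, swapIn_apply_of_ne_of_ne P hya hyb] at h ⊢
  by_cases hza : z = a
  · subst hza; simp only [swapIn_apply_left]; omega
  by_cases hzb : z = b
  · subst hzb; simp only [swapIn_apply_right]; omega
  rw [swapIn_apply_of_ne_of_ne P hza hzb]

theorem DirAbove.prefOver_swapIn {P : Pref C} {a y c : C} (h : DirAbove P a y)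
    (hc : PrefOver P c y) (hca : c ≠ a) : PrefOver (swapIn P a y) c y := by
  have := val_apply_ne P hca
  rw [prefOver_iff] at hc ⊢
  rw [swapIn_apply_right, swapIn_apply_of_ne_of_ne P hca (prefOver_iff.2 hc).ne]
  rw [DirAbove] at h
  omega

theorem DirAbove.not_prefOver_swapIn {P : Pref C} {a b : C} (h : DirAbove P a b) :
    ¬PrefOver (swapIn P a b) a b :=
  h.dirAbove_swapIn.prefOver.not_prefOver

theorem val_moveToTop_self (e : Pref C) (x : C) :
    (moveToTop e x x : ℕ) = Fintype.card C - 1 := by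
  simp [moveToTop, Fin.val_rev, Fin.coe_cycleRange_of_le le_rfl]

theorem val_moveToTop_of_ne (e : Pref C) {x z : C} (hz : z ≠ x) :
    (moveToTop e x z : ℕ) = if (e z : ℕ) < e x then (e z : ℕ) else (e z : ℕ) - 1 := by
  have hzx := val_apply_ne e hz
  have := (e z).isLt
  have := (e x).isLt
  simp only [moveToTop, Equiv.trans_apply, Fin.revPerm_apply]
  split_ifs with h
  · rw [Fin.cycleRange_of_gt (Fin.rev_lt_rev.2 (Fin.lt_def.2 h)), Fin.rev_rev]
  · rw [Fin.val_rev, Fin.coe_cycleRange_of_lt (Fin.rev_lt_rev.2 (Fin.lt_def.2 (by omega))),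
      Fin.val_rev]
    omega

theorem topC_moveToTop [Nonempty C] (e : Pref C) (x : C) : topC (moveToTop e x) = x :=
  topC_eq_iff.2 (val_moveToTop_self e x)

theorem prefOver_moveToTop_iff {e : Pref C} {x z w : C} (hz : z ≠ x) (hw : w ≠ x) :
    PrefOver (moveToTop e x) z w ↔ PrefOver e z w := by
  have := val_apply_ne e hz
  have := val_apply_ne e hw
  rw [prefOver_iff, prefOver_iff, val_moveToTop_of_ne e hz, val_moveToTop_of_ne e hw]
  split_ifs <;> omega

theorem prefOver_moveToTop_iff_of_prefOver [Nonempty C] {e : Pref C} {x y : C}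
    (h : PrefOver e x y) (z : C) : PrefOver (moveToTop e x) z y ↔ PrefOver e z y := by
  by_cases hz : z = x
  · subst hz
    exact iff_of_true (prefOver_of_topC_eq (topC_moveToTop e z) h.ne.symm) h
  · exact prefOver_moveToTop_iff hz h.ne.symm

theorem DirAbove.moveToTop {e : Pref C} {a y x : C} (h : DirAbove e a y) (ha : a ≠ x)
    (hy : y ≠ x) : DirAbove (_root_.moveToTop e x) a y := by
  have := val_apply_ne e ha
  have := val_apply_ne e hy
  rw [DirAbove] at h ⊢
  rw [val_moveToTop_of_ne e ha, val_moveToTop_of_ne e hy]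
  split_ifs <;> omega

theorem val_moveToBot_self (e : Pref C) (x : C) : (moveToBot e x x : ℕ) = 0 := by
  simp [moveToBot, Fin.coe_cycleRange_of_le le_rfl]

theorem discordance_swapIn_lt {P Q : Pref C} {a b : C} (h : DirAbove P a b)
    (hQ : PrefOver Q b a) : discordance (swapIn P a b) Q < discordance P Q := by
  have hab := h.prefOver.ne
  have split : ∀ f : C → ℕ, ∑ z, f z = f a + f b + ∑ z ∈ (Finset.univ.erase a).erase b, f z :=
    fun f => by
      rw [add_assoc, Finset.add_sum_erase _ _ (Finset.mem_erase.2 ⟨hab.symm, Finset.mem_univ b⟩),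
        Finset.add_sum_erase _ _ (Finset.mem_univ a)]
  have hrest : ∑ z ∈ (Finset.univ.erase a).erase b, (swapIn P a b z : ℕ) * (Q z).rev =
      ∑ z ∈ (Finset.univ.erase a).erase b, (P z : ℕ) * (Q z).rev :=
    Finset.sum_congr rfl fun z hz => by
      rw [swapIn_apply_of_ne_of_ne P (Finset.ne_of_mem_erase (Finset.mem_of_mem_erase hz))
        (Finset.ne_of_mem_erase hz)]
  have hrev : ((Q b).rev : ℕ) < (Q a).rev := Fin.lt_def.1 (Fin.rev_lt_rev.2 hQ)
  rw [discordance, discordance, split, split, hrest, swapIn_apply_left, swapIn_apply_right,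
    show (P a : ℕ) = P b + 1 from h]
  nlinarith

end Orderings

section VotingRules

variable [Fintype C] {n : ℕ} {v : (Fin n → Pref C) → C → ℝ}

theorem IsVotingRule.apply_le_one (hv : IsVotingRule v) (P : Fin n → Pref C) (x : C) :
    v P x ≤ 1 :=
  hv.2 P ▸ Finset.single_le_sum (fun z _ => hv.1 P z) (Finset.mem_univ x)

theorem Anonymous.apply_update_const (han : Anonymous v) (B T : Pref C) (i j : Fin n) :
    v (update (fun _ => B) i T) = v (update (fun _ => B) j T) := by
  funext x
  have := han (Equiv.swap i j) (update (fun _ => B) j T) x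
  rw [update_comp_equiv] at this
  simpa [comp_def] using this

variable [DecidableEq C]

theorem IsVotingRule.apply_eq_of_forall_ne (hv : IsVotingRule v) {P Q : Fin n → Pref C} {x : C}
    (h : ∀ z ≠ x, v Q z = v P z) : v Q x = v P x := by
  have hP := hv.2 P
  have hQ := hv.2 Q
  rw [← Finset.add_sum_erase _ _ (Finset.mem_univ x)] at hP hQ
  rw [Finset.sum_congr rfl fun z hz => h z (Finset.ne_of_mem_erase hz)] at hQ
  linarith

theorem IsVotingRule.apply_eq_zero_of_apply_eq_one (hv : IsVotingRule v) {P : Fin n → Pref C}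
    {c x : C} (hc : v P c = 1) (hx : x ≠ c) : v P x = 0 := by
  have hsum := hv.2 P
  rw [← Finset.add_sum_erase _ _ (Finset.mem_univ c),
    ← Finset.add_sum_erase _ _ (Finset.mem_erase.2 ⟨hx, Finset.mem_univ x⟩)] at hsum
  have := Finset.sum_nonneg fun z (_ : z ∈ ((Finset.univ.erase c).erase x)) => hv.1 P z
  linarith [hv.1 P x]

def swapGain (v : (Fin n → Pref C) → C → ℝ) (P : Fin n → Pref C) (i : Fin n) (a y : C) : ℝ :=
  v (update P i (swapIn (P i) a y)) y - v P y

theorem PairwiseResponsive.apply_update_eq (hpr : PairwiseResponsive v) {y : C} {B : Pref C}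
    {P : Fin n → Pref C} {i : Fin n} (h : ∀ z, PrefOver (P i) z y ↔ PrefOver B z y) :
    v (update P i B) y = v P y := by
  induction hk : discordance (P i) B using Nat.strong_induction_on generalizing P with
  | _ k ih =>
  by_cases hPB : P i = B
  · rw [← hPB, update_eq_self]
  obtain ⟨a, b, hab, hba⟩ := exists_dirAbove_prefOver_of_ne hPB
  have hya : y ≠ a := by
    rintro rfl; exact hab.prefOver.not_prefOver ((h b).2 hba)
  have hyb : y ≠ b := by
    rintro rfl; exact hba.not_prefOver ((h a).1 hab.prefOver)
  have := ih _ (hk ▸ discordance_swapIn_lt hab hba) (P := update P i (swapIn (P i) a b))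
    (by simpa [hab.prefOver_swapIn_iff hya hyb] using h) (by simp)
  rw [update_idem] at this
  rw [this, hpr P i a b y hab hya hyb]

theorem PairwiseResponsive.apply_eq (hpr : PairwiseResponsive v) {y : C} {P Q : Fin n → Pref C}
    (h : ∀ i z, PrefOver (P i) z y ↔ PrefOver (Q i) z y) : v P y = v Q y :=
  (apply_eq_of_forall_update_eq (F := (v · y)) fun _ i hR =>
    hpr.apply_update_eq fun z => hR ▸ h i z).symm

variable [Nonempty C]

theorem apply_eq_one_of_forall_topC_eq (hv : IsVotingRule v) (hpr : PairwiseResponsive v)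
    (hsw : SuperWeakUnanimity 0 v) {P : Fin n → Pref C} {c : C} (h : ∀ i, topC (P i) = c) :
    v P c = 1 := by
  obtain ⟨W, hWc, hW⟩ := hsw c
  rw [hpr.apply_eq (Q := W) fun i z =>
    iff_of_false (not_prefOver_of_topC_eq (h i) z) (not_prefOver_of_topC_eq (hWc i) z)]
  linarith [hv.apply_le_one W c]

theorem apply_eq_zero_of_forall_prefOver (hv : IsVotingRule v) (hpr : PairwiseResponsive v)
    (hsw : SuperWeakUnanimity 0 v) {P : Fin n → Pref C} {c y : C} (hcy : c ≠ y)
    (h : ∀ i, PrefOver (P i) c y) : v P y = 0 := by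
  rw [hpr.apply_eq (Q := fun i => moveToTop (P i) c) fun i z =>
    (prefOver_moveToTop_iff_of_prefOver (h i) z).symm]
  exact hv.apply_eq_zero_of_apply_eq_one
    (apply_eq_one_of_forall_topC_eq hv hpr hsw fun i => topC_moveToTop (P i) c) hcy.symm

/-- Isolation lets the other voters put `c` on top; then `y` has probability `0` before and
after the swap, by Pareto efficiency. -/
theorem swapGain_eq_zero (hv : IsVotingRule v) (hpr : PairwiseResponsive v)
    (hpi : PairwiseIsolated v) (hsw : SuperWeakUnanimity 0 v) {P : Fin n → Pref C} {i : Fin n}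
    {a y c : C} (hd : DirAbove (P i) a y) (hc : PrefOver (P i) c y) (hca : c ≠ a) :
    swapGain v P i a y = 0 := by
  have hcy := hc.ne
  set Pc : Fin n → Pref C := fun j => moveToTop (P j) c
  have hzero : ∀ B, PrefOver B c y → v (update Pc i B) y = 0 := fun B hB =>
    apply_eq_zero_of_forall_prefOver hv hpr hsw hcy fun j => by
      by_cases hj : j = i
      · subst hj; simpa using hB
      · simpa [hj, Pc] using prefOver_of_topC_eq (topC_moveToTop (P j) c) hcy.symm
  rw [swapGain, ← hpi i P (update Pc i (P i)) a y hd (update_self ..) fun j hj => by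
    simpa [hj, Pc] using (prefOver_moveToTop_iff hca.symm hcy.symm).symm]
  simp only [update_self, update_idem, hzero _ hc, hzero _ (hd.prefOver_swapIn hc hca),
    sub_zero]

/-- The candidate `b` passed by `x` keeps its probability by `swapGain_eq_zero` (the top
candidate stays above it), all others by pairwise responsiveness. -/
theorem apply_update_swapIn_eq (hv : IsVotingRule v) (hpr : PairwiseResponsive v)
    (hpi : PairwiseIsolated v) (hsw : SuperWeakUnanimity 0 v) {P : Fin n → Pref C} {i : Fin n}
    {x b : C} (hd : DirAbove (P i) x b) (htop : topC (P i) ≠ x) :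
    v (update P i (swapIn (P i) x b)) x = v P x := by
  refine hv.apply_eq_of_forall_ne fun z hzx => ?_
  by_cases hzb : z = b
  · subst hzb
    have hbtop : z ≠ topC (P i) := fun h =>
      not_prefOver_of_topC_eq h.symm x hd.prefOver
    exact sub_eq_zero.1 (swapGain_eq_zero hv hpr hpi hsw hd
      (prefOver_of_topC_eq rfl hbtop) htop)
  · exact hpr P i x b z hd hzx hzb

theorem apply_update_eq_of_val_eq_zero (hv : IsVotingRule v) (hpr : PairwiseResponsive v)
    (hpi : PairwiseIsolated v) (hsw : SuperWeakUnanimity 0 v) {x : C} {B : Pref C}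
    (hB : (B x : ℕ) = 0) {P : Fin n → Pref C} {i : Fin n} (htop : topC (P i) ≠ x) :
    v (update P i B) x = v P x := by
  induction hr : (P i x : ℕ) generalizing P with
  | zero =>
    exact hpr.apply_update_eq fun z => by
      rw [prefOver_iff_ne_of_val_eq_zero hr, prefOver_iff_ne_of_val_eq_zero hB]
  | succ r ih =>
    have hxtop : r + 1 ≠ Fintype.card C - 1 := hr ▸ mt topC_eq_iff.2 htop
    set b := (P i).symm ⟨r, by have := (P i x).isLt; omega⟩
    have hd : DirAbove (P i) x b := by simp [DirAbove, b, hr]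
    have := ih (P := update P i (swapIn (P i) x b)) (by
      rw [update_self, Ne, topC_eq_iff, swapIn_apply_left]; simp [b]; omega) (by simp [b])
    rw [update_idem] at this
    rw [this, apply_update_swapIn_eq hv hpr hpi hsw hd htop]

theorem swapGain_update_swapIn (hv : IsVotingRule v) (hpr : PairwiseResponsive v)
    (hpi : PairwiseIsolated v) (hsw : SuperWeakUnanimity 0 v) {R : Fin n → Pref C}
    {i j : Fin n} (hji : j ≠ i) {a y c : C} (hd : DirAbove (R j) a y) (hc : PrefOver (R j) c y)
    (hca : c ≠ a) : swapGain v (update R j (swapIn (R j) a y)) i a y = swapGain v R i a y := by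
  have hR := swapGain_eq_zero hv hpr hpi hsw hd hc hca
  have hR' := swapGain_eq_zero hv hpr hpi hsw (P := update R i (swapIn (R i) a y)) (i := j)
    (by simpa [hji] using hd) (by simpa [hji] using hc) hca
  simp only [swapGain, update_of_ne hji, update_of_ne hji.symm] at hR hR' ⊢
  rw [update_comm hji]
  linarith

/-- Isolation reduces the other voters to the two orderings `D = moveToTop (P i) c` and
`swapIn D a y`, between which they can be switched at no cost by `swapGain_update_swapIn`. -/
theorem swapGain_eq_of_apply_eq (hv : IsVotingRule v) (hpr : PairwiseResponsive v)
    (hpi : PairwiseIsolated v) (hsw : SuperWeakUnanimity 0 v) {P Q : Fin n → Pref C}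
    {i : Fin n} {a y c : C} (hd : DirAbove (P i) a y) (hca : c ≠ a) (hcy : c ≠ y)
    (hPQ : P i = Q i) : swapGain v P i a y = swapGain v Q i a y := by
  set B := P i
  set D := moveToTop B c
  have hD : DirAbove D a y := hd.moveToTop hca.symm hcy.symm
  have hDc : PrefOver D c y := prefOver_of_topC_eq (topC_moveToTop B c) hcy.symm
  suffices key : ∀ P : Fin n → Pref C, P i = B →
      swapGain v P i a y = swapGain v (update (fun _ => D) i B) i a y from
    (key P rfl).trans (key Q hPQ.symm).symm
  intro P hP
  set Dbits : Fin n → Pref C := fun j => if PrefOver (P j) a y then D else swapIn D a y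
  have hflip : ∀ R j, R j = D →
      swapGain v (update (update R j (Dbits j)) i B) i a y = swapGain v (update R i B) i a y := by
    intro R j hRj
    by_cases hji : j = i
    · rw [hji, update_idem]
    by_cases hb : PrefOver (P j) a y
    · simp only [Dbits, hb, if_true, ← hRj, update_eq_self]
    · simp only [Dbits, hb, if_false]
      rw [update_comm hji]
      have hRj' : update R i B j = D := by rw [update_of_ne hji, hRj]
      rw [← hRj']
      exact swapGain_update_swapIn hv hpr hpi hsw hji (hRj' ▸ hD) (hRj' ▸ hDc) hca
  calc swapGain v P i a y = swapGain v (update Dbits i B) i a y := by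
        refine (hpi i P _ a y (hP ▸ hd) (by simp [hP]) fun j hj => ?_).symm
        by_cases hb : PrefOver (P j) a y
        · simpa [Dbits, hj, hb] using hD.prefOver
        · simpa [Dbits, hj, hb] using hD.not_prefOver_swapIn
    _ = _ := apply_eq_of_forall_update_eq (F := fun R => swapGain v (update R i B) i a y) hflip


theorem apply_update_sub_eq (hm : 3 ≤ Fintype.card C) (hv : IsVotingRule v) (han : Anonymous v)
    (hpr : PairwiseResponsive v) (hpi : PairwiseIsolated v) (hsw : SuperWeakUnanimity 0 v)
    {x : C} {T Bot : Pref C} (hT : topC T = x) (hBot : (Bot x : ℕ) = 0) {P Q : Fin n → Pref C}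
    {i j : Fin n} (hP : P i = Bot) (hQ : Q j = Bot) :
    v (update P i T) x - v P x = v (update Q j T) x - v Q x := by
  obtain ⟨y, hTy⟩ := exists_dirAbove_of_topC_eq (by omega) hT
  obtain ⟨c, hcx, hcy⟩ := ENat.exists_ne_ne_of_three_le
    (by rw [ENat.card_eq_coe_fintype_card]; exact_mod_cast hm) x y
  set Tpre := swapIn T x y
  have hd : DirAbove Tpre y x := hTy.dirAbove_swapIn
  have htop : topC Tpre ≠ x := fun h => not_prefOver_of_topC_eq h y hd.prefOver
  -- Switching from `Bot` to `Tpre` is free as `x` is not on top of `Tpre`; `Tpre → T` is a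
  -- top arrival.
  have hgain : ∀ (R : Fin n → Pref C) k, R k = Bot →
      v (update R k T) x - v R x = swapGain v (update R k Tpre) k y x := by
    intro R k hRk
    have hbot := apply_update_eq_of_val_eq_zero hv hpr hpi hsw hBot (P := update R k Tpre) (i := k)
      (by rwa [update_self])
    rw [update_idem, ← hRk, update_eq_self] at hbot
    simp [swapGain, Tpre, hbot, swapIn_swapIn]
  have hconst : ∀ (R : Fin n → Pref C) k, R k = Bot →
      v (update R k T) x - v R x = v (update (fun _ => Bot) k T) x - v (fun _ => Bot) x := by
    intro R k hRk
    rw [hgain R k hRk, hgain _ k rfl]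
    exact swapGain_eq_of_apply_eq hv hpr hpi hsw (by simpa using hd) hcy hcx (by simp)
  rw [hconst P i hP, hconst Q j hQ, han.apply_update_const Bot T i j]

theorem apply_piecewise_eq_card_div (hm : 3 ≤ Fintype.card C) (hn : 1 ≤ n) (hv : IsVotingRule v)
    (han : Anonymous v) (hpr : PairwiseResponsive v) (hpi : PairwiseIsolated v)
    (hsw : SuperWeakUnanimity 0 v) {x : C} {T Bot : Pref C} (hT : topC T = x)
    (hBot : (Bot x : ℕ) = 0) (s : Finset (Fin n)) :
    v (s.piecewise (fun _ => T) (fun _ => Bot)) x = s.card / n := by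
  set d := v (update (fun _ => Bot) ⟨0, hn⟩ T) x - v (fun _ => Bot) x
  have hstep : ∀ (s : Finset (Fin n)) i, i ∉ s →
      v ((insert i s).piecewise (fun _ => T) (fun _ => Bot)) x =
        v (s.piecewise (fun _ => T) (fun _ => Bot)) x + d := fun s i hi => by
    rw [Finset.piecewise_insert, ← sub_eq_iff_eq_add']
    exact apply_update_sub_eq hm hv han hpr hpi hsw hT hBot (s.piecewise_eq_of_notMem _ _ hi) rfl
  have hlinear := Finset.eq_add_card_mul_of_insert
    (f := fun s => v (s.piecewise (fun _ => T) (fun _ => Bot)) x) hstep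
  have hBot_top : topC Bot ≠ x := fun h => by rw [topC_eq_iff, hBot] at h; omega
  have h0 : v (fun _ => Bot) x = 0 :=
    hv.apply_eq_zero_of_apply_eq_one (apply_eq_one_of_forall_topC_eq hv hpr hsw fun _ => rfl)
      hBot_top.symm
  have h1 := apply_eq_one_of_forall_topC_eq hv hpr hsw (P := fun _ => T) fun _ => hT
  have hd : (n : ℝ) * d = 1 := by
    simpa [h0, h1] using (hlinear Finset.univ).symm
  rw [hlinear, Finset.piecewise_empty, h0, zero_add, eq_div_iff (by positivity)]
  linear_combination (s.card : ℝ) * hd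

theorem apply_eq_apply_piecewise (hv : IsVotingRule v) (hpr : PairwiseResponsive v)
    (hpi : PairwiseIsolated v) (hsw : SuperWeakUnanimity 0 v) {x : C} {T Bot : Pref C}
    (hT : topC T = x) (hBot : (Bot x : ℕ) = 0) (P : Fin n → Pref C) :
    v P x = v ((Finset.univ.filter fun i => topC (P i) = x).piecewise (fun _ => T) (fun _ => Bot))
      x := by
  refine (apply_eq_of_forall_update_eq (F := (v · x)) fun R i hR => ?_).symm
  by_cases hi : topC (P i) = x
  · rw [Finset.piecewise_eq_of_mem _ _ _ (by simpa using hi)]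
    exact hpr.apply_update_eq fun z =>
      iff_of_false (not_prefOver_of_topC_eq (hR ▸ hi) z) (not_prefOver_of_topC_eq hT z)
  · rw [Finset.piecewise_eq_of_notMem _ _ _ (by simpa using hi)]
    exact apply_update_eq_of_val_eq_zero hv hpr hpi hsw hBot (hR ▸ hi)

end VotingRules

/-- Exact case (McLennan's theorem as the ε = 0 instance). -/
theorem mclennan_exact_case [Fintype C] [Nonempty C] [DecidableEq C]
    (hm : 3 ≤ Fintype.card C) {n : ℕ} (hn : 1 ≤ n)
    (v : (Fin n → Pref C) → C → ℝ) (hv : IsVotingRule v) (han : Anonymous v)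
    (hpr : PairwiseResponsive v) (hpi : PairwiseIsolated v)
    (hsw : SuperWeakUnanimity 0 v) :
    ∀ (Pvec : Fin n → Pref C) (x : C), v Pvec x = vdict Pvec x := by
  intro Pvec x
  have hT := topC_moveToTop (Fintype.equivFin C) x
  have hBot := val_moveToBot_self (Fintype.equivFin C) x
  rw [apply_eq_apply_piecewise hv hpr hpi hsw hT hBot Pvec,
    apply_piecewise_eq_card_div hm hn hv han hpr hpi hsw hT hBot, vdict]
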